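/- Let a, b, c, d be integers with gcd(a, b, c, d) = 1. The S¹ action on SU(2) × SU(2) given by z ∗ (A, B) = (D(z^a) · A · D(z^c)⁻¹, D(z^b) · B · D(z^d)⁻¹) is effectively free if and only if for every choice of signs ε, ε' ∈ {1, −1}, gcd(a + εc, b + ε'd) divides 2 (equivalently, equals 1 or 2). -/

import Mathlib

/-!
Conjugating by diagonal matrices acts entrywise: `D(u) A D(v)⁻¹ = A` says `u A₀₀ = A₀₀ v`,
`u A₀₁ = A₀₁ v̄`, `ū A₁₀ = A₁₀ v`, `ū A₁₁ = A₁₁ v̄`. Since `det A = 1` forces `A₀₀ ≠ 0` or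
`A₀₁ ≠ 0`, some `A ∈ SU(2)` is fixed iff `u = v` or `uv = 1` (take `A = 1` or `A = j`), and every
`A` is fixed iff both hold. For `z` of order `n` this means: `z` has a fixed point iff `n` divides
one of `a ± c` and one of `b ± d`, and `z` acts trivially iff `n` divides all four numbers, which
(given one of each and `gcd(a, b, c, d) = 1`) happens iff `n ∣ 2`. As `S¹` has elements of every
order, "`n ∣ gcd(a + εc, b + ε'd)` implies `n ∣ 2` for every order `n`" is `gcd(a + εc, b + ε'd) ∣ 2`.
-/

open Matrix

/-- `D u = diag(u, ū)` for `u` in the circle. -/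
noncomputable def DMat (u : Circle) : Matrix (Fin 2) (Fin 2) ℂ :=
  Matrix.diagonal ![(u : ℂ), (starRingEnd ℂ) (u : ℂ)]

lemma DMat_eq_diagonal (u : Circle) : DMat u = diagonal ![(u : ℂ), (u : ℂ)⁻¹] := by
  rw [DMat, ← Circle.coe_inv_eq_conj, Circle.coe_inv]

lemma DMat_mul (u v : Circle) : DMat u * DMat v = DMat (u * v) := by
  simp only [DMat_eq_diagonal, diagonal_mul_diagonal, Circle.coe_mul, mul_inv]
  congr 1
  ext i
  fin_cases i <;> simp

lemma DMat_one : DMat 1 = 1 := by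
  simp [DMat_eq_diagonal, ← diagonal_one]

lemma DMat_mul_DMat_inv (u : Circle) : DMat u * DMat u⁻¹ = 1 := by
  rw [DMat_mul, mul_inv_cancel, DMat_one]

lemma DMat_inv (u : Circle) : (DMat u)⁻¹ = DMat u⁻¹ :=
  inv_eq_right_inv (DMat_mul_DMat_inv u)

lemma DMat_mul_mul_inv_eq_self_iff (u v : Circle) (A : Matrix (Fin 2) (Fin 2) ℂ) :
    DMat u * A * (DMat v)⁻¹ = A ↔
      u * A 0 0 = A 0 0 * v ∧ u * A 0 1 = A 0 1 * (v : ℂ)⁻¹ ∧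
        (u : ℂ)⁻¹ * A 1 0 = A 1 0 * v ∧ (u : ℂ)⁻¹ * A 1 1 = A 1 1 * (v : ℂ)⁻¹ := by
  have hcomm : DMat u * A * (DMat v)⁻¹ = A ↔ DMat u * A = A * DMat v := by
    rw [DMat_inv]
    constructor
    · intro h
      conv_rhs => rw [← h]
      rw [mul_assoc, DMat_mul, inv_mul_cancel, DMat_one, mul_one]
    · intro h
      rw [h, mul_assoc, DMat_mul_DMat_inv, mul_one]
  rw [hcomm, ← Matrix.ext_iff, Fin.forall_fin_two, Fin.forall_fin_two, Fin.forall_fin_two]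
  simp [DMat_eq_diagonal, and_assoc]

lemma DMat_mul_one_mul_inv_eq_one_iff (u v : Circle) : DMat u * 1 * (DMat v)⁻¹ = 1 ↔ u = v := by
  rw [DMat_mul_mul_inv_eq_self_iff]
  simp [Circle.ext_iff]

lemma DMat_mul_J_mul_inv_eq_J_iff (u v : Circle) :
    DMat u * !![0, 1; -1, 0] * (DMat v)⁻¹ = !![0, 1; -1, 0] ↔ u * v = 1 := by
  rw [DMat_mul_mul_inv_eq_self_iff, ← eq_inv_iff_mul_eq_one, Circle.ext_iff]
  simp [inv_eq_iff_eq_inv]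

lemma J_mem_specialUnitaryGroup : !![0, 1; -1, 0] ∈ specialUnitaryGroup (Fin 2) ℂ := by
  rw [mem_specialUnitaryGroup_iff, mem_unitaryGroup_iff, det_fin_two_of]
  refine ⟨?_, by norm_num⟩
  ext i j
  fin_cases i <;> fin_cases j <;> simp [mul_apply, Fin.sum_univ_two, star_apply]

lemma eq_or_mul_eq_one_of_DMat_mul_mul_inv_eq_self {u v : Circle}
    {A : Matrix (Fin 2) (Fin 2) ℂ} (hA : A.det = 1) (h : DMat u * A * (DMat v)⁻¹ = A) :
    u = v ∨ u * v = 1 := by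
  rw [DMat_mul_mul_inv_eq_self_iff] at h
  obtain ⟨h00, h01, -, -⟩ := h
  rw [det_fin_two] at hA
  by_cases h0 : A 0 0 = 0
  · have h1 : A 0 1 ≠ 0 := by
      rintro h1
      simp [h0, h1] at hA
    right
    rw [← eq_inv_iff_mul_eq_one, Circle.ext_iff, Circle.coe_inv]
    exact mul_right_cancel₀ h1 (by rw [h01, mul_comm])
  · left
    exact Circle.ext (mul_right_cancel₀ h0 (by rw [h00, mul_comm]))

lemma DMat_mul_mul_inv_eq_self_of_eq_of_mul_eq_one {u v : Circle} (h : u = v) (huv : u * v = 1)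
    (A : Matrix (Fin 2) (Fin 2) ℂ) : DMat u * A * (DMat v)⁻¹ = A := by
  subst h
  have hinv : (u : ℂ)⁻¹ = u := by rw [← Circle.coe_inv, inv_eq_of_mul_eq_one_left huv]
  simp only [DMat_mul_mul_inv_eq_self_iff, hinv, mul_comm (u : ℂ), and_self]

lemma exists_DMat_mul_mul_inv_eq_self_iff (u v : Circle) :
    (∃ A ∈ specialUnitaryGroup (Fin 2) ℂ, DMat u * A * (DMat v)⁻¹ = A) ↔ u = v ∨ u * v = 1 := by
  refine ⟨fun ⟨A, hA, h⟩ => eq_or_mul_eq_one_of_DMat_mul_mul_inv_eq_self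
    (mem_specialUnitaryGroup_iff.1 hA).2 h, ?_⟩
  rintro (h | h)
  · exact ⟨1, one_mem _, (DMat_mul_one_mul_inv_eq_one_iff u v).2 h⟩
  · exact ⟨_, J_mem_specialUnitaryGroup, (DMat_mul_J_mul_inv_eq_J_iff u v).2 h⟩

lemma forall_DMat_mul_mul_inv_eq_self_iff (u v : Circle) :
    (∀ A ∈ specialUnitaryGroup (Fin 2) ℂ, DMat u * A * (DMat v)⁻¹ = A) ↔ u = v ∧ u * v = 1 :=
  ⟨fun h => ⟨(DMat_mul_one_mul_inv_eq_one_iff u v).1 (h 1 (one_mem _)),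
      (DMat_mul_J_mul_inv_eq_J_iff u v).1 (h _ J_mem_specialUnitaryGroup)⟩,
    fun ⟨h, huv⟩ A _ => DMat_mul_mul_inv_eq_self_of_eq_of_mul_eq_one h huv A⟩

lemma zpow_eq_zpow_iff_orderOf_dvd_sub {G : Type*} [Group G] (z : G) (p q : ℤ) :
    z ^ p = z ^ q ↔ (orderOf z : ℤ) ∣ p - q := by
  rw [← mul_inv_eq_one, ← _root_.zpow_sub, orderOf_dvd_iff_zpow_eq_one]

lemma zpow_mul_zpow_eq_one_iff_orderOf_dvd_add {G : Type*} [Group G] (z : G) (p q : ℤ) :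
    z ^ p * z ^ q = 1 ↔ (orderOf z : ℤ) ∣ p + q := by
  rw [← _root_.zpow_add, orderOf_dvd_iff_zpow_eq_one]

section Pair

variable (z : Circle) (a b c d : ℤ)

lemma exists_pair_DMat_zpow_fixed_iff :
    (∃ A B : Matrix (Fin 2) (Fin 2) ℂ,
      A ∈ specialUnitaryGroup (Fin 2) ℂ ∧ B ∈ specialUnitaryGroup (Fin 2) ℂ ∧
      DMat (z ^ a) * A * (DMat (z ^ c))⁻¹ = A ∧ DMat (z ^ b) * B * (DMat (z ^ d))⁻¹ = B) ↔
    ((orderOf z : ℤ) ∣ a - c ∨ (orderOf z : ℤ) ∣ a + c) ∧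
      ((orderOf z : ℤ) ∣ b - d ∨ (orderOf z : ℤ) ∣ b + d) := by
  simp only [← zpow_eq_zpow_iff_orderOf_dvd_sub, ← zpow_mul_zpow_eq_one_iff_orderOf_dvd_add,
    ← exists_DMat_mul_mul_inv_eq_self_iff]
  exact ⟨fun ⟨A, B, hA, hB, hfA, hfB⟩ => ⟨⟨A, hA, hfA⟩, ⟨B, hB, hfB⟩⟩,
    fun ⟨⟨A, hA, hfA⟩, ⟨B, hB, hfB⟩⟩ => ⟨A, B, hA, hB, hfA, hfB⟩⟩

lemma forall_pair_DMat_zpow_fixed_iff :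
    (∀ A B : Matrix (Fin 2) (Fin 2) ℂ,
      A ∈ specialUnitaryGroup (Fin 2) ℂ → B ∈ specialUnitaryGroup (Fin 2) ℂ →
      DMat (z ^ a) * A * (DMat (z ^ c))⁻¹ = A ∧ DMat (z ^ b) * B * (DMat (z ^ d))⁻¹ = B) ↔
    ((orderOf z : ℤ) ∣ a - c ∧ (orderOf z : ℤ) ∣ a + c) ∧
      ((orderOf z : ℤ) ∣ b - d ∧ (orderOf z : ℤ) ∣ b + d) := by
  simp only [← zpow_eq_zpow_iff_orderOf_dvd_sub, ← zpow_mul_zpow_eq_one_iff_orderOf_dvd_add,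
    ← forall_DMat_mul_mul_inv_eq_self_iff]
  exact ⟨fun h => ⟨fun A hA => (h A 1 hA (one_mem _)).1, fun B hB => (h 1 B (one_mem _) hB).2⟩,
    fun h A B hA hB => ⟨h.1 A hA, h.2 B hB⟩⟩

end Pair

namespace Int

lemma dvd_sub_or_dvd_add_iff {n p q : ℤ} :
    n ∣ p - q ∨ n ∣ p + q ↔ ∃ ε : ℤ, (ε = 1 ∨ ε = -1) ∧ n ∣ p + ε * q := by
  simp [or_and_right, exists_or, or_comm, ← sub_eq_add_neg]

lemma dvd_sub_and_dvd_add_iff {n p q ε : ℤ} (hε : ε = 1 ∨ ε = -1) (h : n ∣ p + ε * q) :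
    n ∣ p - q ∧ n ∣ p + q ↔ n ∣ 2 * q := by
  refine ⟨fun ⟨hsub, hadd⟩ => by simpa [two_mul] using dvd_sub hadd hsub, fun h2 => ?_⟩
  rcases hε with rfl | rfl
  · refine ⟨?_, by simpa using h⟩
    have h' := dvd_sub h h2
    rwa [show p + 1 * q - 2 * q = p - q by ring] at h'
  · refine ⟨by simpa [← sub_eq_add_neg] using h, ?_⟩
    have h' := dvd_add h h2
    rwa [show p + -1 * q + 2 * q = p + q by ring] at h'

lemma dvd_two_of_dvd_two_mul {a b c d n : ℤ}
    (hgcd : Int.gcd a (Int.gcd b (Int.gcd c d : ℤ) : ℤ) = 1)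
    (ha : n ∣ 2 * a) (hb : n ∣ 2 * b) (hc : n ∣ 2 * c) (hd : n ∣ 2 * d) : n ∣ 2 := by
  have h := Int.dvd_coe_gcd ha (Int.dvd_coe_gcd hb (Int.dvd_coe_gcd hc hd))
  simpa [Int.gcd_mul_left, hgcd] using h

lemma dvd_two_iff_of_dvd {a b c d n ε ε' : ℤ}
    (hgcd : Int.gcd a (Int.gcd b (Int.gcd c d : ℤ) : ℤ) = 1)
    (hε : ε = 1 ∨ ε = -1) (hε' : ε' = 1 ∨ ε' = -1) (ha : n ∣ a + ε * c) (hb : n ∣ b + ε' * d) :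
    (n ∣ a - c ∧ n ∣ a + c) ∧ (n ∣ b - d ∧ n ∣ b + d) ↔ n ∣ 2 := by
  rw [dvd_sub_and_dvd_add_iff hε ha, dvd_sub_and_dvd_add_iff hε' hb]
  refine ⟨fun ⟨hc, hd⟩ => dvd_two_of_dvd_two_mul hgcd ?_ ?_ hc hd,
    fun h2 => ⟨h2.mul_right c, h2.mul_right d⟩⟩
  · have h := dvd_sub (ha.mul_left 2) (hc.mul_left ε)
    rwa [show 2 * (a + ε * c) - ε * (2 * c) = 2 * a by ring] at h
  · have h := dvd_sub (hb.mul_left 2) (hd.mul_left ε')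
    rwa [show 2 * (b + ε' * d) - ε' * (2 * d) = 2 * b by ring] at h

lemma dvd_some_imp_dvd_all_iff {a b c d : ℤ}
    (hgcd : Int.gcd a (Int.gcd b (Int.gcd c d : ℤ) : ℤ) = 1) (n : ℤ) :
    ((n ∣ a - c ∨ n ∣ a + c) ∧ (n ∣ b - d ∨ n ∣ b + d) →
      (n ∣ a - c ∧ n ∣ a + c) ∧ (n ∣ b - d ∧ n ∣ b + d)) ↔
    ∀ ε ε' : ℤ, (ε = 1 ∨ ε = -1) → (ε' = 1 ∨ ε' = -1) →
      n ∣ Int.gcd (a + ε * c) (b + ε' * d) → n ∣ 2 := by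
  simp only [dvd_sub_or_dvd_add_iff, dvd_coe_gcd_iff]
  constructor
  · rintro H ε ε' hε hε' ⟨ha, hb⟩
    exact (dvd_two_iff_of_dvd hgcd hε hε' ha hb).1 (H ⟨⟨ε, hε, ha⟩, ⟨ε', hε', hb⟩⟩)
  · rintro H ⟨⟨ε, hε, ha⟩, ⟨ε', hε', hb⟩⟩
    exact (dvd_two_iff_of_dvd hgcd hε hε' ha hb).2 (H ε ε' hε hε' ⟨ha, hb⟩)

end Int

lemma Circle.forall_zpow_eq_one_imp_iff_dvd (m k : ℤ) :
    (∀ z : Circle, z ^ m = 1 → z ^ k = 1) ↔ m ∣ k := by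
  refine ⟨fun H => ?_, fun ⟨l, hl⟩ z hz => by rw [hl, _root_.zpow_mul, hz, _root_.one_zpow]⟩
  have key (n : ℕ) [NeZero n] (hn : (n : ℤ) ∣ m) : (n : ℤ) ∣ k := by
    obtain ⟨ζ, hζ⟩ := HasEnoughRootsOfUnity.exists_primitiveRoot Circle n
    exact (hζ.zpow_eq_one_iff_dvd k).1 (H ζ ((hζ.zpow_eq_one_iff_dvd m).2 hn))
  rcases eq_or_ne m 0 with rfl | hm
  -- for `m = 0`, a root of unity of order `|k| + 1 > |k|` forces `k = 0`
  · rw [Int.eq_zero_of_dvd_of_natAbs_lt_natAbs (key (k.natAbs + 1) (dvd_zero _)) (by omega)]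
  · have : NeZero m.natAbs := ⟨Int.natAbs_ne_zero.2 hm⟩
    exact Int.natAbs_dvd.1 (key m.natAbs (Int.natAbs_dvd.2 dvd_rfl))

/-- For integers `a, b, c, d` with `gcd(a, b, c, d) = 1`, the `S¹` action on
`SU(2) × SU(2)` given by `z ∗ (A, B) = (D(z^a) A D(z^c)⁻¹, D(z^b) B D(z^d)⁻¹)` is
effectively free iff for every choice of signs `ε, ε' ∈ {1, −1}`,
`gcd(a + εc, b + ε'd)` divides `2` (i.e. equals `1` or `2`). -/
theorem circle_action_effectively_free_iff (a b c d : ℤ)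
    (hgcd : Int.gcd a (Int.gcd b (Int.gcd c d : ℤ) : ℤ) = 1) :
    (∀ z : Circle,
      (∃ A B : Matrix (Fin 2) (Fin 2) ℂ,
        A ∈ Matrix.specialUnitaryGroup (Fin 2) ℂ ∧ B ∈ Matrix.specialUnitaryGroup (Fin 2) ℂ ∧
        DMat (z ^ a) * A * (DMat (z ^ c))⁻¹ = A ∧ DMat (z ^ b) * B * (DMat (z ^ d))⁻¹ = B) →
      (∀ A B : Matrix (Fin 2) (Fin 2) ℂ,
        A ∈ Matrix.specialUnitaryGroup (Fin 2) ℂ → B ∈ Matrix.specialUnitaryGroup (Fin 2) ℂ →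
        DMat (z ^ a) * A * (DMat (z ^ c))⁻¹ = A ∧ DMat (z ^ b) * B * (DMat (z ^ d))⁻¹ = B)) ↔
    (∀ ε ε' : ℤ, (ε = 1 ∨ ε = -1) → (ε' = 1 ∨ ε' = -1) →
      (Int.gcd (a + ε * c) (b + ε' * d) : ℤ) ∣ 2) := by
  calc _ ↔ ∀ z : Circle, ∀ ε ε' : ℤ, (ε = 1 ∨ ε = -1) → (ε' = 1 ∨ ε' = -1) →
          z ^ (Int.gcd (a + ε * c) (b + ε' * d) : ℤ) = 1 → z ^ (2 : ℤ) = 1 := by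
        refine forall_congr' fun z => ?_
        rw [exists_pair_DMat_zpow_fixed_iff, forall_pair_DMat_zpow_fixed_iff,
          Int.dvd_some_imp_dvd_all_iff hgcd]
        simp only [orderOf_dvd_iff_zpow_eq_one]
    _ ↔ _ :=
      ⟨fun H ε ε' hε hε' => (Circle.forall_zpow_eq_one_imp_iff_dvd _ _).1 fun z => H z ε ε' hε hε',
        fun H z ε ε' hε hε' => (Circle.forall_zpow_eq_one_imp_iff_dvd _ _).2 (H ε ε' hε hε') z⟩
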